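/- Let r and q be positive integers with r dividing 2q, and write 2q = m·r with m odd (so r is even, say r = 2j). Let G = ℤ_j × (ℤ_{2(m+1)} ⋊ ℤ₂), where ℤ₂ acts on ℤ_{2(m+1)} by n ↦ −n, and let H be the copy of ℤ₂ inside the semidirect product factor. Then H has order 2, [Z_G(H) : H] = r, and [G : H] = r + 2q. -/

import Mathlib

/-!
The generator `g = (1, t)` of `H`, with `t` the reflection of the semidirect factor, has
order 2. An element `(a, n, s)` of `G` commutes with `g` exactly when `-n = n`, and in
`ℤ_{2(m+1)}` this means `n ∈ {0, m + 1}`; hence `|Z_G(H)| = 4j` while `|G| = 4j(m+1)`.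
Dividing by `|H| = 2` gives `[Z_G(H) : H] = 2j = r` and `[G : H] = 2j(m+1) = r + mr = r + 2q`.
-/

/-- The inversion automorphism `n ↦ -n` of `ℤ_k`, written multiplicatively. -/
noncomputable def negAut (k : ℕ) : MulAut (Multiplicative (ZMod k)) :=
  MulEquiv.inv (Multiplicative (ZMod k))

/-- The action of `ℤ₂` on `ℤ_k` by inversion, as a homomorphism into the
automorphism group. -/
noncomputable def invHom (k : ℕ) :
    Multiplicative (ZMod 2) →* MulAut (Multiplicative (ZMod k)) :=
  AddMonoidHom.toMultiplicativeLeft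
    (ZMod.lift 2 ⟨zmultiplesHom _ (Additive.ofMul (negAut k)), by
      have h2 : negAut k * negAut k = 1 := by
        ext x
        exact inv_inv x
      simp [two_zsmul, ← ofMul_mul, h2]⟩)

theorem Nat.card_multiplicative (α : Type*) : Nat.card (Multiplicative α) = Nat.card α :=
  Nat.card_congr Multiplicative.toAdd

namespace Subgroup

variable {G N : Type*} [Group G] [Group N]

theorem card_mul_relIndex {H K : Subgroup G} (h : H ≤ K) :
    Nat.card H * H.relIndex K = Nat.card K := by
  rw [← relIndex_bot_left, ← relIndex_bot_left, relIndex_mul_relIndex ⊥ H K bot_le h]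

theorem card_prod (H : Subgroup G) (K : Subgroup N) :
    Nat.card (H.prod K) = Nat.card H * Nat.card K := by
  rw [Nat.card_congr (H.prodEquiv K).toEquiv, Nat.card_prod]

theorem centralizer_zpowers (g : G) : centralizer (zpowers g : Set G) = centralizer {g} := by
  rw [zpowers_eq_closure, centralizer_closure]

theorem centralizer_singleton_one : centralizer {(1 : G)} = ⊤ := by
  ext x
  simp [mem_centralizer_singleton_iff]

theorem centralizer_singleton_prod (g : G) (n : N) :
    centralizer {(g, n)} = (centralizer {g}).prod (centralizer {n}) := by
  ext x
  simp [mem_centralizer_singleton_iff, mem_prod, Prod.ext_iff]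

end Subgroup

namespace SemidirectProduct

variable {N G : Type*} [Group N] [CommGroup G] {φ : G →* MulAut N}

theorem mem_centralizer_inr_iff {g : G} {x : N ⋊[φ] G} :
    x ∈ Subgroup.centralizer {inr g} ↔ φ g x.left = x.left := by
  simp [Subgroup.mem_centralizer_singleton_iff, SemidirectProduct.ext_iff, mul_comm, eq_comm]

theorem card_centralizer_inr (g : G) :
    Nat.card (Subgroup.centralizer {(inr g : N ⋊[φ] G)}) =
      Nat.card {n : N // φ g n = n} * Nat.card G := by
  rw [← Nat.card_prod]
  exact Nat.card_congr <| (equivProd.subtypeEquiv fun _ ↦ mem_centralizer_inr_iff).trans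
    (Equiv.prodSubtypeFstEquivSubtypeProd (p := fun n ↦ φ g n = n))

end SemidirectProduct

theorem ZMod.card_neg_eq_self (n : ℕ) [NeZero n] :
    Nat.card {a : ZMod (2 * n) // -a = a} = 2 := by
  have hn : n < 2 * n := by have := NeZero.pos n; omega
  have : NeZero (2 * n) := ⟨by omega⟩
  have hfix : {a : ZMod (2 * n) | -a = a} = {0, (n : ZMod (2 * n))} := by
    ext a
    rw [Set.mem_ofPred_eq, ZMod.neg_eq_self_iff, Set.mem_insert_iff, Set.mem_singleton_iff]
    refine or_congr_right ⟨fun h ↦ ?_, fun h ↦ ?_⟩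
    · rw [← ZMod.natCast_zmod_val a, show a.val = n by omega]
    · rw [h, ZMod.val_natCast_of_lt hn]
  have h0n : (0 : ZMod (2 * n)) ≠ n := fun h ↦
    NeZero.ne n (by simpa [ZMod.val_natCast_of_lt hn] using (congrArg ZMod.val h).symm)
  rw [← Set.coe_ofPred, Nat.card_coe_set_eq, hfix, Set.ncard_pair h0n]

theorem invHom_ofAdd_one (k : ℕ) (x : Multiplicative (ZMod k)) :
    invHom k (Multiplicative.ofAdd 1) x = x⁻¹ := by
  -- `ZMod.lift` is evaluated through `ZMod.lift_coe`, on casts of integers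
  rw [← Int.cast_one (R := ZMod 2)]
  simp only [invHom, AddMonoidHom.coe_toMultiplicativeLeft, Function.comp_apply, toAdd_ofAdd,
    ZMod.lift_coe]
  simp [negAut]

theorem card_fixed_invHom_ofAdd_one (n : ℕ) [NeZero n] :
    Nat.card {x // invHom (2 * n) (Multiplicative.ofAdd 1) x = x} = 2 := by
  refine (Nat.card_congr (Multiplicative.toAdd.subtypeEquiv fun x ↦ ?_)).trans
    (ZMod.card_neg_eq_self n)
  rw [invHom_ofAdd_one, ← Multiplicative.toAdd.injective.eq_iff, toAdd_inv]

theorem orderOf_inr_ofAdd_one (k : ℕ) :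
    orderOf (SemidirectProduct.inr (φ := invHom k) (Multiplicative.ofAdd (1 : ZMod 2))) = 2 := by
  rw [orderOf_injective SemidirectProduct.inr SemidirectProduct.inr_injective,
    orderOf_ofAdd_eq_addOrderOf, ZMod.addOrderOf_one]

theorem card_centralizer_zpowers_one_inr_ofAdd_one (A : Type*) [Group A] (n : ℕ) [NeZero n] :
    Nat.card (Subgroup.centralizer (SetLike.coe (Subgroup.zpowers ((1 : A),
      SemidirectProduct.inr (φ := invHom (2 * n)) (Multiplicative.ofAdd (1 : ZMod 2)))))) =
      Nat.card A * (2 * 2) := by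
  rw [Subgroup.centralizer_zpowers, Subgroup.centralizer_singleton_prod,
    Subgroup.centralizer_singleton_one, Subgroup.card_prod, Subgroup.card_top,
    SemidirectProduct.card_centralizer_inr, card_fixed_invHom_ofAdd_one,
    Nat.card_multiplicative, Nat.card_zmod]

theorem exists_group_case_m_odd_general (r q m j : ℕ)
    (hm : 2 * q = m * r) (hj : r = 2 * j) :
    ∀ H : Subgroup (Multiplicative (ZMod j) ×
        (Multiplicative (ZMod (2 * (m + 1))) ⋊[invHom (2 * (m + 1))]
          Multiplicative (ZMod 2))),
      H = Subgroup.zpowers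
          ((1, SemidirectProduct.inr (Multiplicative.ofAdd (1 : ZMod 2)))) →
      Nat.card H = 2 ∧
      H.relIndex (Subgroup.centralizer (H : Set _)) = r ∧
      H.index = r + 2 * q := by
  intro H hH
  have hH_card : Nat.card H = 2 := by
    rw [hH, Nat.card_zpowers, Prod.orderOf, orderOf_one, orderOf_inr_ofAdd_one, Nat.lcm_one_left]
  have hZ_card : Nat.card (Subgroup.centralizer (SetLike.coe H)) = j * (2 * 2) := by
    rw [hH, card_centralizer_zpowers_one_inr_ofAdd_one, Nat.card_multiplicative, Nat.card_zmod]
  have hG_card : Nat.card (Multiplicative (ZMod j) ×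
      (Multiplicative (ZMod (2 * (m + 1))) ⋊[invHom (2 * (m + 1))] Multiplicative (ZMod 2))) =
      j * (2 * (m + 1) * 2) := by
    simp only [Nat.card_prod, SemidirectProduct.card, Nat.card_multiplicative, Nat.card_zmod]
  refine ⟨hH_card, ?_, ?_⟩
  · have hle : H ≤ Subgroup.centralizer H := hH ▸ Subgroup.le_centralizer _
    have hrel := Subgroup.card_mul_relIndex hle
    rw [hH_card, hZ_card] at hrel
    omega
  · have hidx := H.card_mul_index
    rw [hH_card, hG_card] at hidx
    subst hj
    linarith

/-- For positive integers `r, q` with `2q = m·r`, `m` odd and `r = 2j`, the group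
`G = ℤ_j × (ℤ_{2(m+1)} ⋊ ℤ₂)` (inversion action) with `H` the copy of `ℤ₂` in the
semidirect factor satisfies `|H| = 2`, `[Z_G(H) : H] = r`, `[G : H] = r + 2q`. -/
theorem exists_group_case_m_odd (r q m j : ℕ) (hr : 0 < r) (hq : 0 < q)
    (hm : 2 * q = m * r) (hmo : Odd m) (hj : r = 2 * j) :
    ∀ H : Subgroup (Multiplicative (ZMod j) ×
        (Multiplicative (ZMod (2 * (m + 1))) ⋊[invHom (2 * (m + 1))]
          Multiplicative (ZMod 2))),
      H = Subgroup.zpowers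
          ((1, SemidirectProduct.inr (Multiplicative.ofAdd (1 : ZMod 2)))) →
      Nat.card H = 2 ∧
      H.relIndex (Subgroup.centralizer (H : Set _)) = r ∧
      H.index = r + 2 * q :=
  exists_group_case_m_odd_general r q m j hm hj
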